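/- (Theorem 1, Static Folk Theorem) Assume that for each principal m the outer infimum defining the minmax value V̲^m is attained by some profile of punishment transfer schedules t̃^{-m,m} ∈ T^{-m}. Then the set Z* of PIR-AM allocations equals the set of truthful Λ-equilibrium allocations: an allocation (s,d) ∈ S × ℝ≥0^{M×N} is the equilibrium allocation of some truthful Λ-equilibrium if and only if (s,d) satisfies AM and PIR. -/

import Mathlib

open scoped Classical
open Finset

noncomputable section

namespace CMGPTA

/-- A profile of transfer schedules of one principal: a nonnegative payment
schedule for each agent. -/
def Sched (N : Type*) (S : N → Type*) : Type _ := ∀ n : N, S n → NNReal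

/-- A deviator-reporting mechanism (DRM) of a principal: no-deviation schedules
together with punishment schedules, one for each potentially deviating principal. -/
def DRM (M N : Type*) (S : N → Type*) : Type _ := Sched N S × (M → Sched N S)

/-- Agents' communication strategies: a report in `M̄ = M ∪ {0}` (encoded as
`Option M`, with `none` standing for `0`) to each principal, given any profile of DRMs. -/
abbrev CommStrat (M N : Type*) (S : N → Type*) : Type _ :=
  ∀ _ : N, (M → DRM M N S) → M → Option M

/-- Agents' action strategies: an action given the profile of DRMs, the agent's own
reports, and the assigned transfer schedules. -/
abbrev ActStrat (M N : Type*) (S : N → Type*) : Type _ :=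
  ∀ n : N, (M → DRM M N S) → (M → Option M) → (M → Sched N S) → S n

variable {M N : Type*} [Fintype M] [Fintype N] [DecidableEq M] [DecidableEq N]
variable {S : N → Type*} [∀ n, Fintype (S n)] [∀ n, Nonempty (S n)]

/-- Number of agents sending report `v`. -/
def cnt (k : N → Option M) (v : Option M) : ℕ :=
  (Finset.univ.filter fun n => k n = v).card

/-- The transfer schedules assigned by principal `m`'s DRM given the agents' reports:
the punishment schedules against `j` if some `j ≠ m` is reported by strictly more than
`N/2` agents, the zero schedules if two distinct reports `≠ m` are each sent by exactly
`N/2` agents, and the no-deviation schedules otherwise. -/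
def drmOut (m : M) (d : DRM M N S) (k : N → Option M) : Sched N S :=
  if h : ∃ j : M, j ≠ m ∧ Fintype.card N < 2 * cnt k (some j) then d.2 h.choose
  else if ∃ v v' : Option M, v ≠ v' ∧ v ≠ some m ∧ v' ≠ some m ∧
      2 * cnt k v = Fintype.card N ∧ 2 * cnt k v' = Fintype.card N then
    fun _ _ => 0
  else d.1

/-- The schedules assigned to the agents given the DRMs and communication strategies. -/
def assigned (lam : M → DRM M N S) (x : CommStrat M N S) : M → Sched N S :=
  fun m => drmOut m (lam m) fun n => x n lam m

/-- The action profile induced by the strategies. -/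
def act (lam : M → DRM M N S) (x : CommStrat M N S) (sig : ActStrat M N S) :
    ∀ n, S n :=
  fun n => sig n lam (x n lam) (assigned lam x)

/-- Principal `m`'s net payoff. -/
def V (G : M → (∀ n, S n) → ℝ) (lam : M → DRM M N S) (x : CommStrat M N S)
    (sig : ActStrat M N S) (m : M) : ℝ :=
  G m (act lam x sig) - ∑ n, (assigned lam x m n (act lam x sig n) : ℝ)

/-- Condition 1: agents' actions are optimal given any assigned schedules. -/
def ActOpt (F : ∀ n : N, S n → ℝ) (sig : ActStrat M N S) : Prop :=
  ∀ (n : N) (lam : M → DRM M N S) (kn : M → Option M) (t : M → Sched N S) (s' : S n),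
    F n s' + ∑ m, (t m n s' : ℝ) ≤
      F n (sig n lam kn t) + ∑ m, (t m n (sig n lam kn t) : ℝ)

/-- Agent `n`'s continuation payoff when she unilaterally sends the reports `kn`
while the other agents follow `x`. -/
def agentPayoff (F : ∀ n : N, S n → ℝ) (sig : ActStrat M N S) (x : CommStrat M N S)
    (lam : M → DRM M N S) (n : N) (kn : M → Option M) : ℝ :=
  let t : M → Sched N S :=
    fun m => drmOut m (lam m) (Function.update (fun i => x i lam m) n (kn m));
  F n (sig n lam kn t) + ∑ m, (t m n (sig n lam kn t) : ℝ)

/-- Condition 2: each agent's report profile is a best response given the other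
agents' reports and the induced schedules and continuation actions. -/
def MsgOpt (F : ∀ n : N, S n → ℝ) (sig : ActStrat M N S) (x : CommStrat M N S) : Prop :=
  ∀ (n : N) (lam : M → DRM M N S) (kn : M → Option M),
    agentPayoff F sig x lam n kn ≤ agentPayoff F sig x lam n (x n lam)

/-- Condition 3: no principal gains by unilaterally replacing his DRM with any other DRM. -/
def PrinOpt (G : M → (∀ n, S n) → ℝ) (lam : M → DRM M N S) (x : CommStrat M N S)
    (sig : ActStrat M N S) : Prop :=
  ∀ (m : M) (d : DRM M N S), V G (Function.update lam m d) x sig m ≤ V G lam x sig m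

/-- Λ-equilibrium. -/
def LambdaEq (G : M → (∀ n, S n) → ℝ) (F : ∀ n : N, S n → ℝ) (lam : M → DRM M N S)
    (x : CommStrat M N S) (sig : ActStrat M N S) : Prop :=
  ActOpt F sig ∧ MsgOpt F sig x ∧ PrinOpt G lam x sig

/-- Truthful reporting: agents report `0` to every principal on the equilibrium path,
and all report `m` to every principal after a unilateral deviation by principal `m`. -/
def Truthful (lam : M → DRM M N S) (x : CommStrat M N S) : Prop :=
  (∀ (n : N) (k : M), x n lam k = none) ∧
  ∀ (m : M) (d : DRM M N S), d ≠ lam m →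
    ∀ (n : N) (k : M), x n (Function.update lam m d) k = some m

/-- The set `Ŝ(t)` of agents' jointly optimal action profiles given transfer schedules. -/
def Shat (F : ∀ n : N, S n → ℝ) (t : M → Sched N S) : Set (∀ n, S n) :=
  {s | ∀ (n : N) (s' : S n),
    F n s' + ∑ m, (t m n s' : ℝ) ≤ F n (s n) + ∑ m, (t m n (s n) : ℝ)}

/-- Principal `m`'s worst net payoff over agents' optimal action profiles. -/
def worst (G : M → (∀ n, S n) → ℝ) (F : ∀ n : N, S n → ℝ) (m : M)
    (t : M → Sched N S) : ℝ :=
  sInf ((fun s => G m s - ∑ n, (t m n (s n) : ℝ)) '' Shat F t)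

/-- The inner supremum over principal `m`'s own transfer schedules, the other
principals' schedules being fixed. -/
def innerSup (G : M → (∀ n, S n) → ℝ) (F : ∀ n : N, S n → ℝ) (m : M)
    (t : M → Sched N S) : ℝ :=
  sSup {v | ∃ tm : Sched N S, v = worst G F m (Function.update t m tm)}

/-- Principal `m`'s minmax value `V̲^m`. -/
def minmax (G : M → (∀ n, S n) → ℝ) (F : ∀ n : N, S n → ℝ) (m : M) : ℝ :=
  sInf {v | ∃ t : M → Sched N S, v = innerSup G F m t}

/-- Agent maximization: the allocation is supported by transfer schedules under which
the prescribed actions are optimal for the agents. -/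
def AM (F : ∀ n : N, S n → ℝ) (s : ∀ n, S n) (d : M → N → NNReal) : Prop :=
  ∃ t : M → Sched N S, s ∈ Shat F t ∧ ∀ m n, d m n = t m n (s n)

/-- Principal individual rationality. -/
def PIR (G : M → (∀ n, S n) → ℝ) (F : ∀ n : N, S n → ℝ) (s : ∀ n, S n)
    (d : M → N → NNReal) : Prop :=
  ∀ m : M, minmax G F m ≤ G m s - ∑ n, (d m n : ℝ)

/-! ### Auxiliary lemmas -/

attribute [reducible] Sched

lemma cnt_const_self (r : Option M) : cnt (fun _ : N => r) r = Fintype.card N := by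
  simp [cnt]

lemma cnt_const_ne {r w : Option M} (h : r ≠ w) : cnt (fun _ : N => r) w = 0 := by
  simp [cnt, h]

lemma cnt_update_le_one (r v : Option M) (n : N) (w : Option M) (hw : w ≠ r) :
    cnt (Function.update (fun _ : N => r) n v) w ≤ 1 := by
  have hsub : (Finset.univ.filter fun i => Function.update (fun _ : N => r) n v i = w)
      ⊆ {n} := by
    intro i hi
    simp only [Finset.mem_filter] at hi
    by_contra hne
    simp only [Finset.mem_singleton] at hne
    rw [Function.update_of_ne hne] at hi
    exact hw hi.2.symm
  calc cnt (Function.update (fun _ : N => r) n v) w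
      ≤ ({n} : Finset N).card := Finset.card_le_card hsub
    _ = 1 := by simp

lemma drmOut_majority (p : M) (dd : DRM M N S) (k : N → Option M) (m : M)
    (hp : m ≠ p) (hmaj : Fintype.card N < 2 * cnt k (some m))
    (huniq : ∀ j : M, j ≠ p → Fintype.card N < 2 * cnt k (some j) → j = m) :
    drmOut p dd k = dd.2 m := by
  have h : ∃ j : M, j ≠ p ∧ Fintype.card N < 2 * cnt k (some j) := ⟨m, hp, hmaj⟩
  rw [drmOut, dif_pos h]
  exact congrArg dd.2 (huniq h.choose h.choose_spec.1 h.choose_spec.2)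

lemma drmOut_nomaj (p : M) (dd : DRM M N S) (k : N → Option M)
    (h : ¬ ∃ j : M, j ≠ p ∧ Fintype.card N < 2 * cnt k (some j)) :
    drmOut p dd k = dd.1 ∨ drmOut p dd k = fun _ _ => 0 := by
  rw [drmOut, dif_neg h]
  split_ifs with h2
  · exact Or.inr rfl
  · exact Or.inl rfl

lemma nomaj_of_cnt_le (hN : 2 ≤ Fintype.card N) (p : M) (k : N → Option M)
    (h : ∀ j : M, j ≠ p → cnt k (some j) ≤ 1) :
    ¬ ∃ j : M, j ≠ p ∧ Fintype.card N < 2 * cnt k (some j) := by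
  rintro ⟨j, hj, hc⟩
  have := h j hj
  omega

lemma noties_const (hN : 2 ≤ Fintype.card N) (p : M) (r : Option M) :
    ¬ ∃ v v' : Option M, v ≠ v' ∧ v ≠ some p ∧ v' ≠ some p ∧
      2 * cnt (fun _ : N => r) v = Fintype.card N ∧
      2 * cnt (fun _ : N => r) v' = Fintype.card N := by
  rintro ⟨v, v', hvv, _, _, hc, hc'⟩
  by_cases h : v = r
  · have h0 : cnt (fun _ : N => r) v' = 0 :=
      cnt_const_ne (fun e => hvv (by rw [h, ← e]))
    omega
  · have h0 : cnt (fun _ : N => r) v = 0 := cnt_const_ne (fun e => h e.symm)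
    omega

/-- A constant report profile which does not accuse any other principal leads to the
no-deviation schedules. -/
lemma drmOut_const (hN : 2 ≤ Fintype.card N) (p : M) (dd : DRM M N S) (r : Option M)
    (hr : ∀ j : M, j ≠ p → r ≠ some j) :
    drmOut p dd (fun _ : N => r) = dd.1 := by
  have h1 : ¬ ∃ j : M, j ≠ p ∧ Fintype.card N < 2 * cnt (fun _ : N => r) (some j) := by
    rintro ⟨j, hj, hc⟩
    rw [cnt_const_ne (hr j hj)] at hc
    omega
  rw [drmOut, dif_neg h1, if_neg (noties_const hN p r)]

/-- If all agents accuse `m ≠ p`, principal `p` assigns the punishment schedules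
against `m`. -/
lemma drmOut_const_punish (hN : 2 ≤ Fintype.card N) (p m : M) (hpm : m ≠ p)
    (dd : DRM M N S) :
    drmOut p dd (fun _ : N => some m) = dd.2 m := by
  apply drmOut_majority p dd _ m hpm
  · rw [cnt_const_self]; omega
  · intro j hj hc
    by_contra hjm
    rw [cnt_const_ne (fun e => hjm (Option.some.inj e).symm)] at hc
    omega

/-- A single agent deviating from a constant report profile that does not accuse any
principal other than `p` can only trigger the no-deviation schedules or the zero
schedules. -/
lemma drmOut_update_cases (hN : 2 ≤ Fintype.card N) (p : M) (dd : DRM M N S)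
    (r v : Option M) (n : N) (hr : ∀ j : M, j ≠ p → r ≠ some j) :
    drmOut p dd (Function.update (fun _ : N => r) n v) = dd.1 ∨
    drmOut p dd (Function.update (fun _ : N => r) n v) = fun _ _ => 0 := by
  apply drmOut_nomaj
  apply nomaj_of_cnt_le hN
  intro j hj
  exact cnt_update_le_one r v n (some j) (fun e => hr j hj e.symm)

/-- A single agent deviating from the constant profile accusing `m ≠ p` can only
trigger the punishment schedules against `m`, the no-deviation schedules, or the zero
schedules. -/
lemma drmOut_update_cases' (hN : 2 ≤ Fintype.card N) (p m : M) (hpm : m ≠ p)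
    (dd : DRM M N S) (v : Option M) (n : N) :
    drmOut p dd (Function.update (fun _ : N => some m) n v) = dd.2 m ∨
    drmOut p dd (Function.update (fun _ : N => some m) n v) = dd.1 ∨
    drmOut p dd (Function.update (fun _ : N => some m) n v) = fun _ _ => 0 := by
  by_cases h : ∃ j : M, j ≠ p ∧
      Fintype.card N < 2 * cnt (Function.update (fun _ : N => some m) n v) (some j)
  · left
    have huniq : ∀ j : M, j ≠ p →
        Fintype.card N < 2 * cnt (Function.update (fun _ : N => some m) n v) (some j) →
        j = m := by
      intro j hj hc
      by_contra hjm
      have := cnt_update_le_one (some m) v n (some j)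
        (fun e => hjm (Option.some.inj e))
      omega
    obtain ⟨j, hj, hc⟩ := h
    have hjm := huniq j hj hc
    subst hjm
    exact drmOut_majority p dd _ j hpm hc huniq
  · rcases drmOut_nomaj p dd _ h with h1 | h1
    · exact Or.inr (Or.inl h1)
    · exact Or.inr (Or.inr h1)

/-- Each agent has an optimal action given any transfer schedules. -/
lemma exists_best (F : ∀ n : N, S n → ℝ) (t : M → Sched N S) (n : N) :
    ∃ b : S n, ∀ a : S n,
      F n a + ∑ m, (t m n a : ℝ) ≤ F n b + ∑ m, (t m n b : ℝ) := by
  obtain ⟨b, -, hb⟩ := Finset.exists_max_image Finset.univ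
    (fun a : S n => F n a + ∑ m, (t m n a : ℝ))
    ⟨Classical.arbitrary (S n), Finset.mem_univ _⟩
  exact ⟨b, fun a => hb a (Finset.mem_univ a)⟩

/-- A fixed choice of an optimal action. -/
def bestAct (F : ∀ n : N, S n → ℝ) (t : M → Sched N S) (n : N) : S n :=
  (exists_best F t n).choose

lemma bestAct_opt (F : ∀ n : N, S n → ℝ) (t : M → Sched N S) (n : N) (a : S n) :
    F n a + ∑ m, (t m n a : ℝ) ≤
      F n (bestAct F t n) + ∑ m, (t m n (bestAct F t n) : ℝ) :=
  (exists_best F t n).choose_spec a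

lemma Shat_nonempty (F : ∀ n : N, S n → ℝ) (t : M → Sched N S) :
    (Shat F t).Nonempty :=
  ⟨fun n => bestAct F t n, fun n s' => bestAct_opt F t n s'⟩

lemma exists_worstProfile (G : M → (∀ n, S n) → ℝ) (F : ∀ n : N, S n → ℝ) (m : M)
    (t : M → Sched N S) :
    ∃ σ, σ ∈ Shat F t ∧ worst G F m t = G m σ - ∑ n, (t m n (σ n) : ℝ) := by
  obtain ⟨σ, hσ, hmin⟩ := Set.exists_min_image (Shat F t)
    (fun σ => G m σ - ∑ n, (t m n (σ n) : ℝ)) (Set.toFinite _) (Shat_nonempty F t)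
  refine ⟨σ, hσ, le_antisymm ?_ ?_⟩
  · exact csInf_le (Set.Finite.bddBelow ((Set.toFinite _).image _)) ⟨σ, hσ, rfl⟩
  · apply le_csInf ((Shat_nonempty F t).image _)
    rintro b ⟨σ', hσ', rfl⟩
    exact hmin σ' hσ'

/-- A fixed choice of a worst (for principal `m`) optimal action profile. -/
def worstProfile (G : M → (∀ n, S n) → ℝ) (F : ∀ n : N, S n → ℝ) (m : M)
    (t : M → Sched N S) : ∀ n, S n :=
  (exists_worstProfile G F m t).choose

lemma worstProfile_mem (G : M → (∀ n, S n) → ℝ) (F : ∀ n : N, S n → ℝ) (m : M)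
    (t : M → Sched N S) : worstProfile G F m t ∈ Shat F t :=
  (exists_worstProfile G F m t).choose_spec.1

lemma worstProfile_eq (G : M → (∀ n, S n) → ℝ) (F : ∀ n : N, S n → ℝ) (m : M)
    (t : M → Sched N S) :
    worst G F m t = G m (worstProfile G F m t) -
      ∑ n, (t m n (worstProfile G F m t n) : ℝ) :=
  (exists_worstProfile G F m t).choose_spec.2

lemma worst_le (G : M → (∀ n, S n) → ℝ) (F : ∀ n : N, S n → ℝ) (m : M)
    (t : M → Sched N S) {σ : ∀ n, S n} (hσ : σ ∈ Shat F t) :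
    worst G F m t ≤ G m σ - ∑ n, (t m n (σ n) : ℝ) :=
  csInf_le (Set.Finite.bddBelow ((Set.toFinite _).image _)) ⟨σ, hσ, rfl⟩

lemma worst_le_bound (G : M → (∀ n, S n) → ℝ) (F : ∀ n : N, S n → ℝ) (m : M)
    (t : M → Sched N S) {B : ℝ} (hB : ∀ σ, G m σ ≤ B) : worst G F m t ≤ B := by
  obtain ⟨σ, hσ, he⟩ := exists_worstProfile G F m t
  rw [he]
  have h0 : (0:ℝ) ≤ ∑ n, (t m n (σ n) : ℝ) :=
    Finset.sum_nonneg fun n _ => (t m n (σ n)).coe_nonneg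
  linarith [hB σ]

lemma bound_le_worst_zero (G : M → (∀ n, S n) → ℝ) (F : ∀ n : N, S n → ℝ) (m : M)
    (t : M → Sched N S) {b : ℝ} (hb : ∀ σ, b ≤ G m σ) :
    b ≤ worst G F m (Function.update t m (fun _ _ => 0)) := by
  apply le_csInf ((Shat_nonempty F _).image _)
  rintro z ⟨σ, hσ, rfl⟩
  have h0 : ∑ n, ((Function.update t m (fun _ _ => (0:NNReal)) m) n (σ n) : ℝ) = 0 := by
    simp
  show b ≤ G m σ - ∑ n, ((Function.update t m (fun _ _ => (0:NNReal)) m) n (σ n) : ℝ)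
  rw [h0]
  linarith [hb σ]

lemma worst_le_innerSup (G : M → (∀ n, S n) → ℝ) (F : ∀ n : N, S n → ℝ) (m : M)
    (t : M → Sched N S) (tm : Sched N S) :
    worst G F m (Function.update t m tm) ≤ innerSup G F m t := by
  have : Nonempty (∀ n, S n) := ⟨fun n => Classical.arbitrary _⟩
  obtain ⟨σB, -, hB⟩ := Finset.exists_max_image Finset.univ (G m)
    ⟨Classical.arbitrary _, Finset.mem_univ _⟩
  have hbdd : BddAbove {v | ∃ tm' : Sched N S, v = worst G F m (Function.update t m tm')} := by
    refine ⟨G m σB, ?_⟩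
    rintro v ⟨tm', rfl⟩
    exact worst_le_bound G F m _ (fun σ => hB σ (Finset.mem_univ σ))
  exact le_csSup hbdd ⟨tm, rfl⟩

lemma innerSup_le (G : M → (∀ n, S n) → ℝ) (F : ∀ n : N, S n → ℝ) (m : M)
    (t : M → Sched N S) {c : ℝ}
    (h : ∀ tm : Sched N S, worst G F m (Function.update t m tm) ≤ c) :
    innerSup G F m t ≤ c :=
  csSup_le ⟨_, ⟨fun _ _ => 0, rfl⟩⟩ (by rintro v ⟨tm, rfl⟩; exact h tm)

lemma minmax_le_innerSup (G : M → (∀ n, S n) → ℝ) (F : ∀ n : N, S n → ℝ) (m : M)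
    (t : M → Sched N S) : minmax G F m ≤ innerSup G F m t := by
  have : Nonempty (∀ n, S n) := ⟨fun n => Classical.arbitrary _⟩
  obtain ⟨σb, -, hb'⟩ := Finset.exists_min_image Finset.univ (G m)
    ⟨Classical.arbitrary _, Finset.mem_univ _⟩
  have hb : ∀ σ, G m σb ≤ G m σ := fun σ => hb' σ (Finset.mem_univ σ)
  have hbdd : BddBelow {v | ∃ t' : M → Sched N S, v = innerSup G F m t'} := by
    refine ⟨G m σb, ?_⟩
    rintro v ⟨t', rfl⟩
    calc G m σb ≤ worst G F m (Function.update t' m (fun _ _ => 0)) :=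
          bound_le_worst_zero G F m t' hb
      _ ≤ innerSup G F m t' := worst_le_innerSup G F m t' _
  exact csInf_le hbdd ⟨t, rfl⟩

/-- Adding agent-specific constants to the transfer schedules of the principals other
than `m` changes neither the agents' optimal action sets nor principal `m`'s worst
payoff. -/
lemma worst_shift (G : M → (∀ n, S n) → ℝ) (F : ∀ n : N, S n → ℝ) (m : M)
    (t : M → Sched N S) (c : M → N → NNReal) (tm : Sched N S) :
    worst G F m (Function.update (fun p => fun n s' => t p n s' + c p n) m tm) =
      worst G F m (Function.update t m tm) := by
  have hfun : ∀ (X : M → Sched N S) (n : N) (s' : S n),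
      (fun p => ((Function.update X m tm) p n s' : ℝ)) =
      Function.update (fun p => (X p n s' : ℝ)) m ((tm n s' : ℝ)) := by
    intro X n s'
    funext p
    by_cases hp : p = m
    · subst hp; simp
    · rw [Function.update_of_ne hp, Function.update_of_ne hp]
  have hsum : ∀ (X : M → Sched N S) (n : N) (s' : S n),
      ∑ p, ((Function.update X m tm) p n s' : ℝ) =
      (tm n s' : ℝ) + ∑ p ∈ Finset.univ \ {m}, (X p n s' : ℝ) := by
    intro X n s'
    calc ∑ p, ((Function.update X m tm) p n s' : ℝ)
        = ∑ p, Function.update (fun p => (X p n s' : ℝ)) m ((tm n s' : ℝ)) p := by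
          rw [hfun X n s']
      _ = (tm n s' : ℝ) + ∑ p ∈ Finset.univ \ {m}, (X p n s' : ℝ) :=
          Finset.sum_update_of_mem (Finset.mem_univ m) (fun p => (X p n s' : ℝ)) _
  have hShat : Shat F (Function.update (fun p => fun n s' => t p n s' + c p n) m tm) =
      Shat F (Function.update t m tm) := by
    ext σ
    simp only [Shat, Set.mem_setOf_eq]
    constructor <;> intro hσ n s' <;> have h := hσ n s' <;>
      rw [hsum, hsum] at h ⊢ <;>
      [skip; skip] <;>
      · simp only [NNReal.coe_add, Finset.sum_add_distrib] at h ⊢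
        linarith
  have hm1 : (Function.update (fun p => fun n s' => t p n s' + c p n) m tm) m = tm := by
    simp
  have hm2 : (Function.update t m tm) m = tm := by simp
  unfold worst
  rw [hShat, hm1, hm2]

lemma innerSup_shift (G : M → (∀ n, S n) → ℝ) (F : ∀ n : N, S n → ℝ) (m : M)
    (t : M → Sched N S) (c : M → N → NNReal) :
    innerSup G F m (fun p => fun n s' => t p n s' + c p n) = innerSup G F m t := by
  unfold innerSup
  congr 1
  ext v
  constructor
  · rintro ⟨tm, rfl⟩
    exact ⟨tm, worst_shift G F m t c tm⟩
  · rintro ⟨tm, rfl⟩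
    exact ⟨tm, (worst_shift G F m t c tm).symm⟩

/-- The common report sent by all agents: `m` if `lam'` is a unilateral deviation of
`lam` by principal `m`, and `0` (i.e. `none`) otherwise. -/
def repOf (lam lam' : M → DRM M N S) : Option M :=
  if h : ∃ m, lam' m ≠ lam m ∧ ∀ j, j ≠ m → lam' j = lam j then some h.choose else none

lemma repOf_self (lam : M → DRM M N S) : repOf lam lam = none :=
  dif_neg (by rintro ⟨m, hm, -⟩; exact hm rfl)

lemma repOf_spec (lam lam' : M → DRM M N S) {m : M} (h : repOf lam lam' = some m) :
    lam' m ≠ lam m ∧ ∀ j, j ≠ m → lam' j = lam j := by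
  unfold repOf at h
  split_ifs at h with hc
  have hspec := hc.choose_spec
  rw [Option.some_inj] at h
  rwa [h] at hspec

lemma repOf_update (lam : M → DRM M N S) {m : M} {dd : DRM M N S} (hd : dd ≠ lam m) :
    repOf lam (Function.update lam m dd) = some m := by
  have hc : ∃ m', Function.update lam m dd m' ≠ lam m' ∧
      ∀ j, j ≠ m' → Function.update lam m dd j = lam j :=
    ⟨m, by simpa using hd, fun j hj => Function.update_of_ne hj dd lam⟩
  rw [repOf, dif_pos hc]
  congr 1
  by_contra hne
  exact hc.choose_spec.1 (Function.update_of_ne hne dd lam)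

/-! ### The constructed equilibrium -/

/-- Minimal supporting schedules: pay `d p n` for the prescribed action, `0` otherwise. -/
def suppSched (s : ∀ n, S n) (d : M → N → NNReal) : M → Sched N S :=
  fun p n s' => if s' = s n then d p n else 0

/-- The constructed DRM profile: no-deviation schedules are the minimal supporting
schedules; the punishment schedules against `m` are `tpun m` raised by the constant
`d p n` for each agent `n`. -/
def eqLam (s : ∀ n, S n) (d : M → N → NNReal) (tpun : M → M → Sched N S) :
    M → DRM M N S :=
  fun p => (suppSched s d p, fun m => fun n s' => tpun m p n s' + d p n)

/-- The constructed communication strategy: every agent sends `repOf lam0 lam'` to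
every principal. -/
def eqX (lam0 : M → DRM M N S) : CommStrat M N S :=
  fun _ lam' _ => repOf lam0 lam'

/-- The constructed action strategy. -/
def eqSig (G : M → (∀ n, S n) → ℝ) (F : ∀ n : N, S n → ℝ) (lam0 : M → DRM M N S)
    (s : ∀ n, S n) : ActStrat M N S :=
  fun n lam' _ t =>
    (repOf lam0 lam').elim
      (if ∀ a : S n, F n a + ∑ p, (t p n a : ℝ) ≤ F n (s n) + ∑ p, (t p n (s n) : ℝ)
       then s n else bestAct F t n)
      (fun m => worstProfile G F m t n)

lemma actopt_eqSig (G : M → (∀ n, S n) → ℝ) (F : ∀ n : N, S n → ℝ)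
    (lam0 : M → DRM M N S) (s : ∀ n, S n) : ActOpt F (eqSig G F lam0 s) := by
  intro n lam' kn t a
  unfold eqSig
  cases hrep : repOf lam0 lam' with
  | none =>
      simp only [Option.elim]
      split_ifs with h
      · exact h a
      · exact bestAct_opt F t n a
  | some m =>
      simp only [Option.elim]
      exact worstProfile_mem G F m t n a

/-- The key dominance property: given that every agent sends the common report
`repOf lam0 lam'` to every principal, a unilateral report deviation by agent `n` can
only (weakly) decrease the transfers she receives, pointwise, provided that in `lam0`
punishment schedules pointwise dominate no-deviation schedules. -/
lemma dominance_of_dom (hN : 2 ≤ Fintype.card N) (lam0 : M → DRM M N S)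
    (hdom0 : ∀ (p m : M) (n : N) (a : S n), (lam0 p).1 n a ≤ (lam0 p).2 m n a)
    (lam' : M → DRM M N S) (n : N) (v : Option M) (p : M) (a : S n) :
    ((drmOut p (lam' p) (Function.update (fun _ : N => repOf lam0 lam') n v)) n a : ℝ)
      ≤ ((drmOut p (lam' p) (fun _ : N => repOf lam0 lam')) n a : ℝ) := by
  cases hrep : repOf lam0 lam' with
  | none =>
      have hbase : drmOut p (lam' p) (fun _ : N => (none : Option M)) = (lam' p).1 :=
        drmOut_const hN p (lam' p) none (fun j _ => by simp)
      rw [hbase]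
      rcases drmOut_update_cases hN p (lam' p) none v n (fun j _ => by simp) with h | h
      · rw [h]
      · rw [h]
        simpa using ((lam' p).1 n a).coe_nonneg
  | some m =>
      obtain ⟨-, hm2⟩ := repOf_spec _ _ hrep
      by_cases hp : p = m
      · subst hp
        have hr : ∀ j : M, j ≠ p → (some p : Option M) ≠ some j :=
          fun j hj e => hj (Option.some.inj e).symm
        have hbase := drmOut_const hN p (lam' p) (some p) hr
        rw [hbase]
        rcases drmOut_update_cases hN p (lam' p) (some p) v n hr with h | h
        · rw [h]
        · rw [h]
          simpa using ((lam' p).1 n a).coe_nonneg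
      · have hlam'p : lam' p = lam0 p := hm2 p hp
        have hmp : m ≠ p := fun e => hp e.symm
        have hbase := drmOut_const_punish hN p m hmp (lam' p)
        rw [hbase]
        rcases drmOut_update_cases' hN p m hmp (lam' p) v n with h | h | h
        · rw [h]
        · rw [h, hlam'p]
          exact_mod_cast hdom0 p m n a
        · rw [h]
          simpa using ((lam' p).2 m n a).coe_nonneg

lemma msgopt_of_dom (hN : 2 ≤ Fintype.card N) (G : M → (∀ n, S n) → ℝ)
    (F : ∀ n : N, S n → ℝ) (lam0 : M → DRM M N S) (s : ∀ n, S n)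
    (hdom0 : ∀ (p m : M) (n : N) (a : S n), (lam0 p).1 n a ≤ (lam0 p).2 m n a) :
    MsgOpt F (eqSig G F lam0 s) (eqX lam0) := by
  intro n lam' kn
  have hT : (fun p => drmOut p (lam' p)
      (Function.update (fun i : N => eqX lam0 i lam' p) n (eqX lam0 n lam' p))) =
      (fun p => drmOut p (lam' p) (fun _ : N => repOf lam0 lam')) := by
    funext p
    show drmOut p (lam' p)
        (Function.update (fun _ : N => repOf lam0 lam') n (repOf lam0 lam')) = _
    rw [Function.update_eq_self n (fun _ : N => repOf lam0 lam')]
  set udev : M → Sched N S :=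
    fun p => drmOut p (lam' p)
      (Function.update (fun _ : N => repOf lam0 lam') n (kn p)) with hudev
  set ubase : M → Sched N S :=
    fun p => drmOut p (lam' p) (fun _ : N => repOf lam0 lam') with hubase
  have hdev : agentPayoff F (eqSig G F lam0 s) (eqX lam0) lam' n kn =
      F n (eqSig G F lam0 s n lam' kn udev) +
        ∑ p, (udev p n (eqSig G F lam0 s n lam' kn udev) : ℝ) := by
    rw [hudev]; rfl
  have hbasep : agentPayoff F (eqSig G F lam0 s) (eqX lam0) lam' n (eqX lam0 n lam') =
      F n (eqSig G F lam0 s n lam' (eqX lam0 n lam') ubase) +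
        ∑ p, (ubase p n (eqSig G F lam0 s n lam' (eqX lam0 n lam') ubase) : ℝ) := by
    rw [← hT]; rfl
  rw [hdev, hbasep]
  have hdom : ∀ (p : M) (a : S n), (udev p n a : ℝ) ≤ (ubase p n a : ℝ) := by
    intro p a
    rw [hudev, hubase]
    exact dominance_of_dom hN lam0 hdom0 lam' n (kn p) p a
  set σd := eqSig G F lam0 s n lam' kn udev with hσd
  have hsum : ∑ p, (udev p n σd : ℝ) ≤ ∑ p, (ubase p n σd : ℝ) :=
    Finset.sum_le_sum fun p _ => hdom p σd
  calc F n σd + ∑ p, (udev p n σd : ℝ)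
      ≤ F n σd + ∑ p, (ubase p n σd : ℝ) := by linarith
    _ ≤ F n (eqSig G F lam0 s n lam' (eqX lam0 n lam') ubase) +
        ∑ p, (ubase p n (eqSig G F lam0 s n lam' (eqX lam0 n lam') ubase) : ℝ) :=
        actopt_eqSig G F lam0 s n lam' (eqX lam0 n lam') ubase σd

/-- The construction of a truthful Λ-equilibrium supporting a given allocation, given
punishment schedules whose inner supremum is dominated by each principal's payoff. -/
lemma construction (G : M → (∀ n, S n) → ℝ) (F : ∀ n : N, S n → ℝ)
    (hN : 2 ≤ Fintype.card N) (s : ∀ n, S n) (d : M → N → NNReal)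
    (tpun : M → M → Sched N S)
    (hwit : ∀ m : M, innerSup G F m (tpun m) ≤ G m s - ∑ n, (d m n : ℝ))
    (hsupp : s ∈ Shat F (suppSched s d)) :
    ∃ (lam : M → DRM M N S) (x : CommStrat M N S) (sig : ActStrat M N S),
      LambdaEq G F lam x sig ∧ Truthful lam x ∧
      act lam x sig = s ∧ ∀ m n, assigned lam x m n (s n) = d m n := by
  have hdom0 : ∀ (p m : M) (n : N) (a : S n),
      (eqLam s d tpun p).1 n a ≤ (eqLam s d tpun p).2 m n a := by
    intro p m n a
    show suppSched s d p n a ≤ tpun m p n a + d p n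
    unfold suppSched
    split_ifs with h
    · exact le_add_self
    · exact zero_le
  have hxnone : ∀ p : M,
      (fun i : N => eqX (eqLam s d tpun) i (eqLam s d tpun) p) =
        fun _ : N => (none : Option M) :=
    fun p => funext fun i => repOf_self _
  have hassigned0 : assigned (eqLam s d tpun) (eqX (eqLam s d tpun)) = suppSched s d := by
    funext p
    show drmOut p (eqLam s d tpun p)
        (fun i => eqX (eqLam s d tpun) i (eqLam s d tpun) p) = _
    rw [hxnone p]
    exact drmOut_const hN p _ none (fun j _ => by simp)
  have hact0 : act (eqLam s d tpun) (eqX (eqLam s d tpun)) (eqSig G F (eqLam s d tpun) s)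
      = s := by
    funext n
    show eqSig G F (eqLam s d tpun) s n (eqLam s d tpun)
        (eqX (eqLam s d tpun) n (eqLam s d tpun))
        (assigned (eqLam s d tpun) (eqX (eqLam s d tpun))) = s n
    unfold eqSig
    rw [repOf_self, hassigned0]
    simp only [Option.elim]
    exact if_pos (fun a => hsupp n a)
  have hd0' : ∀ m n,
      assigned (eqLam s d tpun) (eqX (eqLam s d tpun)) m n (s n) = d m n := by
    intro m n
    rw [hassigned0]
    simp [suppSched]
  refine ⟨eqLam s d tpun, eqX (eqLam s d tpun), eqSig G F (eqLam s d tpun) s,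
    ⟨actopt_eqSig G F _ s, msgopt_of_dom hN G F _ s hdom0, ?_⟩,
    ⟨fun n k => repOf_self _, fun m dd hne n k => repOf_update _ hne⟩, hact0, hd0'⟩
  -- PrinOpt
  intro m dd
  by_cases hdd : dd = eqLam s d tpun m
  · rw [hdd, Function.update_eq_self]
  · have hrep := repOf_update (eqLam s d tpun) hdd
    have hassigned' : assigned (Function.update (eqLam s d tpun) m dd)
        (eqX (eqLam s d tpun)) =
        Function.update (fun p => (eqLam s d tpun p).2 m) m dd.1 := by
      funext p
      have hk : (fun i : N =>
          eqX (eqLam s d tpun) i (Function.update (eqLam s d tpun) m dd) p) =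
          fun _ : N => some m := funext fun i => hrep
      show drmOut p (Function.update (eqLam s d tpun) m dd p)
          (fun i => eqX (eqLam s d tpun) i (Function.update (eqLam s d tpun) m dd) p) = _
      rw [hk]
      by_cases hp : p = m
      · subst hp
        rw [Function.update_self, Function.update_self]
        exact drmOut_const hN p dd (some p) (fun j hj e => hj (Option.some.inj e).symm)
      · rw [Function.update_of_ne hp, Function.update_of_ne hp]
        exact drmOut_const_punish hN p m (fun e => hp e.symm) _
    have hactm : act (Function.update (eqLam s d tpun) m dd) (eqX (eqLam s d tpun))
        (eqSig G F (eqLam s d tpun) s) =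
        worstProfile G F m (assigned (Function.update (eqLam s d tpun) m dd)
          (eqX (eqLam s d tpun))) := by
      funext n
      show eqSig G F (eqLam s d tpun) s n (Function.update (eqLam s d tpun) m dd)
          (eqX (eqLam s d tpun) n (Function.update (eqLam s d tpun) m dd))
          (assigned (Function.update (eqLam s d tpun) m dd) (eqX (eqLam s d tpun))) = _
      unfold eqSig
      rw [hrep]
      simp only [Option.elim]
    have hV : V G (Function.update (eqLam s d tpun) m dd) (eqX (eqLam s d tpun))
        (eqSig G F (eqLam s d tpun) s) m =
        worst G F m (assigned (Function.update (eqLam s d tpun) m dd)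
          (eqX (eqLam s d tpun))) := by
      unfold V
      rw [hactm]
      exact (worstProfile_eq G F m _).symm
    have hshift : worst G F m (Function.update (fun p => (eqLam s d tpun p).2 m) m dd.1)
        = worst G F m (Function.update (tpun m) m dd.1) := by
      have he : (fun p => (eqLam s d tpun p).2 m) =
          (fun p : M => fun (n : N) (s' : S n) => tpun m p n s' + d p n) := rfl
      rw [he]
      exact worst_shift G F m (tpun m) (fun p n => d p n) dd.1
    have hVpath : V G (eqLam s d tpun) (eqX (eqLam s d tpun))
        (eqSig G F (eqLam s d tpun) s) m = G m s - ∑ n, (d m n : ℝ) := by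
      unfold V
      rw [hact0]
      congr 1
      exact Finset.sum_congr rfl fun n _ => by rw [hd0' m n]
    rw [hV, hassigned', hVpath]
    calc worst G F m (Function.update (fun p => (eqLam s d tpun p).2 m) m dd.1)
        = worst G F m (Function.update (tpun m) m dd.1) := hshift
      _ ≤ innerSup G F m (tpun m) := worst_le_innerSup G F m (tpun m) dd.1
      _ ≤ G m s - ∑ n, (d m n : ℝ) := hwit m

/-- **Theorem 1 (Static Folk Theorem).** If for each principal `m` the outer infimum
defining the minmax value `V̲^m` is attained by some profile of punishment transfer
schedules, then the set `Z*` of PIR-AM allocations is exactly the set of truthful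
Λ-equilibrium allocations. -/
theorem static_folk_theorem
    (G : M → (∀ n, S n) → ℝ) (F : ∀ n : N, S n → ℝ)
    (hM : 2 ≤ Fintype.card M) (hN : 2 ≤ Fintype.card N)
    (hatt : ∀ m : M, ∃ t : M → Sched N S, minmax G F m = innerSup G F m t)
    (s : ∀ n, S n) (d : M → N → NNReal) :
    (∃ (lam : M → DRM M N S) (x : CommStrat M N S) (sig : ActStrat M N S),
        LambdaEq G F lam x sig ∧ Truthful lam x ∧
        act lam x sig = s ∧ ∀ m n, assigned lam x m n (s n) = d m n) ↔
      (AM F s d ∧ PIR G F s d) := by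
  constructor
  · -- Necessity: a truthful Λ-equilibrium allocation satisfies AM and PIR.
    rintro ⟨lam, x, sig, ⟨hAct, hMsg, hPrin⟩, ⟨hT1, hT2⟩, hact, hd⟩
    have hsShat : s ∈ Shat F (assigned lam x) := by
      intro n s'
      have h := hAct n lam (x n lam) (assigned lam x) s'
      have he : sig n lam (x n lam) (assigned lam x) = s n := congrFun hact n
      rwa [he] at h
    refine ⟨⟨assigned lam x, hsShat, fun m n => (hd m n).symm⟩, ?_⟩
    intro m
    have hVeq : V G lam x sig m = G m s - ∑ n, (d m n : ℝ) := by
      unfold V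
      rw [hact]
      congr 1
      exact Finset.sum_congr rfl fun n _ => by rw [hd m n]
    have key : ∀ tm : Sched N S,
        worst G F m (Function.update (fun p => (lam p).2 m) m tm)
          ≤ G m s - ∑ n, (d m n : ℝ) := by
      intro tm
      obtain ⟨n0⟩ : Nonempty N := Fintype.card_pos_iff.mp (by omega)
      obtain ⟨s0⟩ := (inferInstance : Nonempty (S n0))
      have hne : (⟨tm, fun k n s' => (lam m).2 k n s' + 1⟩ : DRM M N S) ≠ lam m := by
        intro he
        have h2 : (fun k => fun (n : N) (s' : S n) => (lam m).2 k n s' + 1) = (lam m).2 :=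
          congrArg Prod.snd he
        have h3 := congrFun (congrFun (congrFun h2 m) n0) s0
        simp at h3
      set dd : DRM M N S := ⟨tm, fun k n s' => (lam m).2 k n s' + 1⟩ with hdd
      have hx : ∀ (i : N) (p : M), x i (Function.update lam m dd) p = some m :=
        fun i p => hT2 m dd hne i p
      have hassigned : assigned (Function.update lam m dd) x =
          Function.update (fun p => (lam p).2 m) m tm := by
        funext p
        have hk : (fun i => x i (Function.update lam m dd) p) = fun _ : N => some m :=
          funext fun i => hx i p
        show drmOut p (Function.update lam m dd p)
            (fun i => x i (Function.update lam m dd) p) = _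
        rw [hk]
        by_cases hp : p = m
        · subst hp
          rw [Function.update_self, Function.update_self]
          have h4 := drmOut_const hN p dd (some p)
            (fun j hj e => hj (Option.some.inj e).symm)
          rw [h4, hdd]
        · rw [Function.update_of_ne hp, Function.update_of_ne hp]
          exact drmOut_const_punish hN p m (fun e => hp e.symm) _
      have hmem : act (Function.update lam m dd) x sig ∈
          Shat F (assigned (Function.update lam m dd) x) := by
        intro n s'
        exact hAct n _ _ _ s'
      have h1 : worst G F m (assigned (Function.update lam m dd) x) ≤
          V G (Function.update lam m dd) x sig m :=
        worst_le G F m _ hmem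
      rw [hassigned] at h1
      have h3 := hPrin m dd
      rw [hVeq] at h3
      linarith
    calc minmax G F m ≤ innerSup G F m (fun p => (lam p).2 m) :=
          minmax_le_innerSup G F m _
      _ ≤ G m s - ∑ n, (d m n : ℝ) := innerSup_le G F m _ key
  · -- Sufficiency: any PIR-AM allocation is a truthful Λ-equilibrium allocation.
    rintro ⟨⟨t0, hs0, hd0⟩, hPIR⟩
    have hsupp : s ∈ Shat F (suppSched s d) := by
      intro n s'
      have h1 : ∀ p : M, (suppSched s d p n s' : ℝ) ≤ (t0 p n s' : ℝ) := by
        intro p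
        by_cases h : s' = s n
        · subst h
          simp [suppSched, hd0 p n]
        · simp [suppSched, h]
      have h2 : ∀ p : M, (suppSched s d p n (s n) : ℝ) = (t0 p n (s n) : ℝ) := by
        intro p
        simp [suppSched, hd0 p n]
      have h3 := hs0 n s'
      have hsum1 : ∑ p, (suppSched s d p n s' : ℝ) ≤ ∑ p, (t0 p n s' : ℝ) :=
        Finset.sum_le_sum fun p _ => h1 p
      have hsum2 : ∑ p, (suppSched s d p n (s n) : ℝ) = ∑ p, (t0 p n (s n) : ℝ) :=
        Finset.sum_congr rfl fun p _ => h2 p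
      show F n s' + ∑ p, (suppSched s d p n s' : ℝ) ≤
        F n (s n) + ∑ p, (suppSched s d p n (s n) : ℝ)
      rw [hsum2]
      linarith
    exact construction G F hN s d (fun m => (hatt m).choose)
      (fun m => by rw [← (hatt m).choose_spec]; exact hPIR m) hsupp

end CMGPTA

end
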